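/- Suppose every (g−1)×n real matrix of tropical rank s has Kapranov rank s, for all s ≤ k. Let A be a g×n real matrix of tropical rank k, and suppose that for some row index i, for every lift F (over the field of generalized Puiseux series, with nonzero entries) of the matrix A with row i deleted, there exists a Puiseux-linear combination of the rows of F whose entrywise order equals row i of A. Then the Kapranov rank of A is k. -/

import Mathlib

open scoped Classical

noncomputable section

/-- The field of generalized Puiseux series: Hahn series with real exponents
and complex coefficients. -/
abbrev Ktilde : Type := HahnSeries ℝ ℂ

/-- The order (least exponent) of a generalized Puiseux series. -/
def ord (x : Ktilde) : ℝ := x.order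

/-- The leading coefficient of a generalized Puiseux series. -/
def orc (x : Ktilde) : ℂ := x.coeff x.order

/-- The tropical determinant of a square real matrix. -/
def tropDet {r : ℕ} (A : Matrix (Fin r) (Fin r) ℝ) : ℝ :=
  sInf {v | ∃ σ : Equiv.Perm (Fin r), v = ∑ i, A i (σ i)}

/-- A square real matrix is tropically singular if the minimum in its
tropical determinant is attained by at least two permutations. -/
def TropSingular {r : ℕ} (A : Matrix (Fin r) (Fin r) ℝ) : Prop :=
  ∃ σ τ : Equiv.Perm (Fin r), σ ≠ τ ∧
    (∑ i, A i (σ i)) = tropDet A ∧ (∑ i, A i (τ i)) = tropDet A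

/-- The tropical rank: the largest size of a tropically nonsingular square
submatrix. -/
def tropRank {m n : ℕ} (M : Matrix (Fin m) (Fin n) ℝ) : ℕ :=
  sSup {r | ∃ ri : Fin r → Fin m, ∃ ci : Fin r → Fin n,
    Function.Injective ri ∧ Function.Injective ci ∧
    ¬ TropSingular (M.submatrix ri ci)}

/-- `F` is a lift of the real matrix `M`: all entries of `F` are nonzero
generalized Puiseux series whose orders are the entries of `M`. -/
def IsLift {m n : ℕ} (F : Matrix (Fin m) (Fin n) Ktilde)
    (M : Matrix (Fin m) (Fin n) ℝ) : Prop :=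
  ∀ i j, F i j ≠ 0 ∧ ord (F i j) = M i j

/-- The Kapranov rank: the smallest classical rank of a lift of `M` to the
field of generalized Puiseux series. -/
def kapRank {m n : ℕ} (M : Matrix (Fin m) (Fin n) ℝ) : ℕ :=
  sInf {r | ∃ F : Matrix (Fin m) (Fin n) Ktilde, IsLift F M ∧ F.rank ≤ r}

/-- The Barvinok rank: the smallest `r` such that `M` is the entrywise
(min-plus) sum of `r` tropical products of a column by a row. -/
def barvRank {m n : ℕ} (M : Matrix (Fin m) (Fin n) ℝ) : ℕ :=
  sInf {r | ∃ (A : Fin r → Fin m → ℝ) (B : Fin r → Fin n → ℝ),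
    ∀ i j, IsLeast {v | ∃ l : Fin r, v = A l i + B l j} (M i j)}

lemma ord_prod {ι : Type*} (s : Finset ι) (f : ι → Ktilde) (hf : ∀ i ∈ s, f i ≠ 0) :
    (∏ i ∈ s, f i) ≠ 0 ∧ (∏ i ∈ s, f i).order = ∑ i ∈ s, (f i).order := by
  classical
  induction s using Finset.cons_induction with
  | empty => exact ⟨one_ne_zero, by simp [HahnSeries.order_one]⟩
  | cons a s ha ih =>
    obtain ⟨h1, h2⟩ := ih (fun i hi => hf i (Finset.mem_cons_of_mem hi))
    have ha' := hf a (Finset.mem_cons_self a s)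
    rw [Finset.prod_cons, Finset.sum_cons]
    exact ⟨mul_ne_zero ha' h1, by rw [HahnSeries.order_mul ha' h1, h2]⟩

lemma tropDet_spec {r : ℕ} (B : Matrix (Fin r) (Fin r) ℝ) :
    (∃ σ : Equiv.Perm (Fin r), (∑ i, B i (σ i)) = tropDet B) ∧
    (∀ σ : Equiv.Perm (Fin r), tropDet B ≤ ∑ i, B i (σ i)) := by
  have hset : {v | ∃ σ : Equiv.Perm (Fin r), v = ∑ i, B i (σ i)} =
      Set.range (fun σ : Equiv.Perm (Fin r) => ∑ i, B i (σ i)) := by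
    ext v; simp [Set.range, eq_comm]
  have hfin : {v | ∃ σ : Equiv.Perm (Fin r), v = ∑ i, B i (σ i)}.Finite := by
    rw [hset]; exact Set.finite_range _
  have hne : {v | ∃ σ : Equiv.Perm (Fin r), v = ∑ i, B i (σ i)}.Nonempty :=
    ⟨∑ i, B i ((1 : Equiv.Perm (Fin r)) i), 1, rfl⟩
  constructor
  · obtain ⟨σ, hσ⟩ := hne.csInf_mem hfin
    exact ⟨σ, hσ.symm⟩
  · exact fun σ => csInf_le hfin.bddBelow ⟨σ, rfl⟩

lemma lift_det_ne_zero {r : ℕ} {B : Matrix (Fin r) (Fin r) ℝ}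
    {F : Matrix (Fin r) (Fin r) Ktilde} (hF : IsLift F B) (hB : ¬ TropSingular B) :
    F.det ≠ 0 := by
  classical
  obtain ⟨⟨τ, hτ⟩, hle⟩ := tropDet_spec B
  set t := tropDet B with ht
  set ρ : Equiv.Perm (Fin r) := τ⁻¹ with hρdef
  have hprod : ∀ σ : Equiv.Perm (Fin r), (∏ x, F (σ x) x) ≠ 0 ∧
      (∏ x, F (σ x) x).order = ∑ x, B (σ x) x := by
    intro σ
    obtain ⟨h1, h2⟩ := ord_prod Finset.univ (fun x => F (σ x) x)
      (fun x _ => (hF (σ x) x).1)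
    refine ⟨h1, h2.trans ?_⟩
    exact Finset.sum_congr rfl fun x _ => (hF (σ x) x).2
  have hρ : (∑ x, B (ρ x) x) = t := by
    rw [← hτ]
    exact (Fintype.sum_equiv τ (fun i => B i (τ i)) (fun x => B (ρ x) x)
      (fun i => by simp [hρdef])).symm
  have hgt : ∀ σ : Equiv.Perm (Fin r), σ ≠ ρ → t < ∑ x, B (σ x) x := by
    intro σ hσ
    have heq : (∑ x, B (σ x) x) = ∑ i, B i (σ⁻¹ i) :=
      Fintype.sum_equiv σ (fun x => B (σ x) x) (fun i => B i (σ⁻¹ i))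
        (fun x => by simp)
    have hle' : t ≤ ∑ x, B (σ x) x := heq ▸ hle σ⁻¹
    rcases lt_or_eq_of_le hle' with h | h
    · exact h
    · exfalso
      apply hB
      refine ⟨σ⁻¹, τ, ?_, (heq ▸ h).symm, hτ⟩
      intro hc
      exact hσ (by rw [hρdef, ← hc, inv_inv])
  intro hdet0
  have key : F.det.coeff t ≠ 0 := by
    have hcoeff : F.det.coeff t = ∑ σ : Equiv.Perm (Fin r),
        (((Equiv.Perm.sign σ : ℤ) : Ktilde) * ∏ x, F (σ x) x).coeff t := by
      rw [Matrix.det_apply' F]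
      exact map_sum (HahnSeries.coeff.addMonoidHom t) _ _
    have hlead : (∏ x, F (ρ x) x).coeff t ≠ 0 := by
      rw [← hρ, ← (hprod ρ).2, ← HahnSeries.leadingCoeff_eq]
      exact HahnSeries.leadingCoeff_ne_zero.mpr (hprod ρ).1
    rw [hcoeff, Finset.sum_eq_single ρ]
    · rcases Int.units_eq_one_or (Equiv.Perm.sign ρ) with h | h <;> rw [h]
      · simpa only [Units.val_one, Int.cast_one, one_mul] using hlead
      · have hcast : ∀ P : Ktilde, ((((-1 : ℤˣ) : ℤ)) : Ktilde) * P = -P := by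
          intro P; push_cast; ring
        rw [hcast, HahnSeries.coeff_neg, neg_ne_zero]
        exact hlead
    · intro σ _ hσ
      have hlt : t < (∏ x, F (σ x) x).order := by
        rw [(hprod σ).2]; exact hgt σ hσ
      have h0 : (∏ x, F (σ x) x).coeff t = 0 :=
        HahnSeries.coeff_eq_zero_of_lt_order hlt
      rcases Int.units_eq_one_or (Equiv.Perm.sign σ) with h | h <;> rw [h]
      · simpa only [Units.val_one, Int.cast_one, one_mul] using h0
      · have hcast : ∀ P : Ktilde, ((((-1 : ℤˣ) : ℤ)) : Ktilde) * P = -P := by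
          intro P; push_cast; ring
        rw [hcast, HahnSeries.coeff_neg, neg_eq_zero]
        exact h0
    · intro h; exact absurd (Finset.mem_univ ρ) h
  rw [hdet0] at key
  simp at key

lemma rank_submatrix_le' {m n k : ℕ} (F : Matrix (Fin m) (Fin n) Ktilde)
    (ri : Fin k → Fin m) (ci : Fin k → Fin n) :
    (F.submatrix ri ci).rank ≤ F.rank := by
  classical
  have h : F.submatrix ri ci =
      (Matrix.of fun a b => if ri a = b then (1 : Ktilde) else 0) * F *
      (Matrix.of fun b j => if ci j = b then (1 : Ktilde) else 0) := by
    ext a j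
    simp [Matrix.mul_apply, ite_mul, mul_ite, Finset.sum_ite_eq, Finset.sum_ite_eq']
  rw [h]
  exact le_trans (Matrix.rank_mul_le_left _ _) (Matrix.rank_mul_le_right _ _)

theorem kapRank_of_develop {g n k : ℕ}
    (hind : ∀ s ≤ k, ∀ B : Matrix (Fin g) (Fin n) ℝ,
      tropRank B = s → kapRank B = s)
    (A : Matrix (Fin (g + 1)) (Fin n) ℝ) (htrop : tropRank A = k)
    (hdev : ∃ i : Fin (g + 1),
      ∀ F : Matrix (Fin g) (Fin n) Ktilde,
        IsLift F (A.submatrix i.succAbove id) →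
        ∃ c : Fin g → Ktilde, ∀ j,
          (∑ l, c l * F l j) ≠ 0 ∧ ord (∑ l, c l * F l j) = A i j) :
    kapRank A = k := by
  classical
  obtain ⟨i, hi⟩ := hdev
  have hAbdd : BddAbove {r | ∃ ri : Fin r → Fin (g+1), ∃ ci : Fin r → Fin n,
      Function.Injective ri ∧ Function.Injective ci ∧ ¬ TropSingular (A.submatrix ri ci)} := by
    refine ⟨g+1, ?_⟩
    rintro r ⟨ri, _, hri, _, _⟩
    simpa using Fintype.card_le_of_injective ri hri
  have hzero : ∀ {m' n' : ℕ} (M : Matrix (Fin m') (Fin n') ℝ),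
      0 ∈ {r | ∃ ri : Fin r → Fin m', ∃ ci : Fin r → Fin n',
        Function.Injective ri ∧ Function.Injective ci ∧ ¬ TropSingular (M.submatrix ri ci)} := by
    intro m' n' M
    refine ⟨Fin.elim0, Fin.elim0, fun a => a.elim0, fun a => a.elim0, ?_⟩
    rintro ⟨σ, τ, hστ, -, -⟩
    exact hστ (Subsingleton.elim σ τ)
  set B := A.submatrix i.succAbove id with hBdef
  have hsub : tropRank B ≤ k := by
    rw [← htrop]
    apply csSup_le_csSup hAbdd ⟨0, hzero B⟩
    rintro r ⟨ri, ci, hri, hci, hns⟩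
    refine ⟨i.succAbove ∘ ri, ci, (Fin.succAbove_right_injective).comp hri, hci, ?_⟩
    have heq : A.submatrix (i.succAbove ∘ ri) ci = B.submatrix ri ci := by
      ext a b; simp [hBdef]
    rw [heq]
    exact hns
  have hkB : kapRank B = tropRank B := hind _ hsub B rfl
  have hBlift : {r | ∃ F, IsLift F B ∧ F.rank ≤ r}.Nonempty := by
    refine ⟨g, (Matrix.of fun a b => HahnSeries.single (B a b) (1 : ℂ)), ?_, ?_⟩
    · intro a b
      exact ⟨HahnSeries.single_ne_zero one_ne_zero,
        by simp [ord, HahnSeries.order_single (one_ne_zero)]⟩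
    · exact Matrix.rank_le_height _
  obtain ⟨F, hF, hFr⟩ := Nat.sInf_mem hBlift
  obtain ⟨c, hc⟩ := hi F hF
  set comb : Fin n → Ktilde := fun j => ∑ l, c l * F l j with hcomb
  set G : Matrix (Fin (g+1)) (Fin n) Ktilde := Matrix.of (i.insertNth comb F) with hGdef
  have hGlift : IsLift G A := by
    intro i' j
    rcases eq_or_ne i' i with rfl | hne
    · have := hc j
      have e := congrFun (Fin.insertNth_apply_same (α := fun _ => Fin n → Ktilde) i' comb F) j
      simpa [hGdef, e] using this
    · obtain ⟨l, rfl⟩ := Fin.exists_succAbove_eq hne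
      have := hF l j
      have e := congrFun (Fin.insertNth_apply_succAbove (α := fun _ => Fin n → Ktilde) i comb F l) j
      simpa [hGdef, e, hBdef] using this
  have hGrank : G.rank ≤ F.rank := by
    have hfac : G = (Matrix.of (i.insertNth c (fun l => Pi.single l (1:Ktilde)))) * F := by
      apply Matrix.ext
      intro i' j
      rcases eq_or_ne i' i with rfl | hne
      · have e := congrFun (Fin.insertNth_apply_same (α := fun _ => Fin n → Ktilde) i'
          (fun j => ∑ l, c l * F l j) F) j
        simp [hGdef, Matrix.mul_apply, Fin.insertNth_apply_same, hcomb, e]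
      · obtain ⟨l, rfl⟩ := Fin.exists_succAbove_eq hne
        have e := congrFun (Fin.insertNth_apply_succAbove (α := fun _ => Fin n → Ktilde) i comb F l) j
        simp [hGdef, Matrix.mul_apply, Fin.insertNth_apply_succAbove, Pi.single_apply, e,
          ite_mul, Finset.sum_ite_eq, Finset.sum_ite_eq']
    rw [hfac]
    exact Matrix.rank_mul_le_right _ _
  have hkmem : k ∈ {r | ∃ F : Matrix (Fin (g+1)) (Fin n) Ktilde,
      IsLift F A ∧ F.rank ≤ r} := by
    refine ⟨G, hGlift, ?_⟩
    calc G.rank ≤ F.rank := hGrank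
      _ ≤ kapRank B := hFr
      _ = tropRank B := hkB
      _ ≤ k := hsub
  have hub : kapRank A ≤ k := Nat.sInf_le hkmem
  have hkA := Nat.sSup_mem ⟨0, hzero A⟩ hAbdd
  rw [show sSup {r | ∃ ri : Fin r → Fin (g+1), ∃ ci : Fin r → Fin n,
      Function.Injective ri ∧ Function.Injective ci ∧
      ¬ TropSingular (A.submatrix ri ci)} = k from htrop] at hkA
  obtain ⟨ri, ci, hri, hci, hns⟩ := hkA
  have hlb : k ≤ kapRank A := by
    apply le_csInf ⟨k, hkmem⟩
    rintro r ⟨F', hF', hF'r⟩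
    have hliftsub : IsLift (F'.submatrix ri ci) (A.submatrix ri ci) :=
      fun a b => hF' (ri a) (ci b)
    have hdet := lift_det_ne_zero hliftsub hns
    have hrk : (F'.submatrix ri ci).rank = k := by
      rw [Matrix.rank_of_isUnit _ ((Matrix.isUnit_iff_isUnit_det _).mpr
        (isUnit_iff_ne_zero.mpr hdet)), Fintype.card_fin]
    calc k = (F'.submatrix ri ci).rank := hrk.symm
      _ ≤ F'.rank := rank_submatrix_le' F' ri ci
      _ ≤ r := hF'r
  exact le_antisymm hub hlb
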